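/- Let 3/2 < β ≤ 2. Then there exists a constant C > 0 such that for every d ∈ ℤ², ∑_{r ∈ ℤ²} (1+|r|²)^{−β/2} (1+|r+d|²)^{−β/2} ≤ C · (1+log(2+|d|)) · (1+|d|²)^{−(β−1)}. -/

import Mathlib

/-!
The substitution `r ↦ -r - d` swaps the two factors, so it suffices to sum over the half where
`|r| ≤ |r + d|`. There `1 + |d|² + |r|² ≤ 5 (1 + |r + d|²)`, and since `3/2 ≤ β ≤ 2` the summand is
at most `5 (1 + |d|²)^(3/2 - β)` times the `β`-free kernel `((1 + |r|²) √(1 + |d|² + |r|²))⁻¹`.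
Summing the kernel along rows with `∑_b (y + b²)⁻¹ ≤ 8 / √y` leaves the one-dimensional sum
`∑_a ((1 + a²)(1 + |d|² + a²))^(-1/2)`: its part `|a| ≤ √(1 + |d|²)` is a harmonic sum, which
produces the logarithm, and its tail is `O((1 + |d|²)^(-1/2))`.
-/

open scoped ENNReal

/-- Squared Euclidean norm on `ℤ²`. -/
noncomputable def nsq (p : ℤ × ℤ) : ℝ := (p.1 : ℝ) ^ 2 + (p.2 : ℝ) ^ 2

open Real Finset

lemma sum_range_inv_add_sq_le {c : ℝ} (hc : 1 / 2 < c) (m : ℕ) :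
    ∑ n ∈ range m, ((c + n) ^ 2)⁻¹ ≤ (c - 1 / 2)⁻¹ := by
  have telescope (n : ℕ) : ((c + n) ^ 2)⁻¹ ≤ (c + n - 1 / 2)⁻¹ - (c + (n + 1 : ℕ) - 1 / 2)⁻¹ := by
    have ht : 1 / 2 < c + n := by linarith [n.cast_nonneg (α := ℝ)]
    rw [show c + (n + 1 : ℕ) - 1 / 2 = c + n + 1 / 2 by push_cast; ring,
      inv_sub_inv (by linarith) (by linarith)]
    calc ((c + n) ^ 2)⁻¹ ≤ ((c + n - 1 / 2) * (c + n + 1 / 2))⁻¹ :=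
          inv_anti₀ (by nlinarith) (by nlinarith)
      _ = _ := by rw [inv_eq_one_div]; congr 1; ring
  calc ∑ n ∈ range m, ((c + n) ^ 2)⁻¹
      ≤ ∑ n ∈ range m, ((c + n - 1 / 2)⁻¹ - (c + (n + 1 : ℕ) - 1 / 2)⁻¹) :=
        sum_le_sum fun n _ => telescope n
    _ = (c - 1 / 2)⁻¹ - (c + m - 1 / 2)⁻¹ := by
        rw [sum_range_sub' fun n : ℕ => (c + n - 1 / 2)⁻¹]; simp
    _ ≤ (c - 1 / 2)⁻¹ := sub_le_self _ (inv_nonneg.2 (by linarith [m.cast_nonneg (α := ℝ)]))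

lemma tsum_inv_add_sq_le {c : ℝ} (hc : 1 ≤ c) :
    ∑' n : ℕ, ENNReal.ofReal (((c + n) ^ 2)⁻¹) ≤ ENNReal.ofReal (2 / c) := by
  refine ENNReal.tsum_le_of_sum_range_le fun m => ?_
  rw [← ENNReal.ofReal_sum_of_nonneg fun n _ => inv_nonneg.2 (sq_nonneg _)]
  refine ENNReal.ofReal_le_ofReal ((sum_range_inv_add_sq_le (by linarith) m).trans ?_)
  rw [inv_eq_one_div, div_le_div_iff₀ (by linarith) (by linarith)]
  linarith

lemma tsum_int_ofReal_le_of_even {g : ℝ → ℝ} (hg : g.Even) {B : ℝ}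
    (h : ∑' n : ℕ, ENNReal.ofReal (g n) ≤ ENNReal.ofReal B) :
    ∑' z : ℤ, ENNReal.ofReal (g z) ≤ ENNReal.ofReal (2 * B) := by
  have hnat : ∑' n : ℕ, ENNReal.ofReal (g (n + 1 : ℕ)) ≤ ∑' n : ℕ, ENNReal.ofReal (g n) :=
    ENNReal.tsum_comp_le_tsum_of_injective (add_left_injective 1) _
  rw [tsum_of_nat_of_neg_add_one ENNReal.summable ENNReal.summable, ENNReal.ofReal_mul zero_le_two,
    ENNReal.ofReal_ofNat, two_mul]
  gcongr
  · simpa using h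
  · refine le_trans (le_of_eq (tsum_congr fun n => ?_)) (hnat.trans h)
    rw [← hg]
    push_cast
    ring_nf

lemma tsum_int_inv_add_sq_le {y : ℝ} (hy : 1 ≤ y) :
    ∑' b : ℤ, ENNReal.ofReal ((y + (b : ℝ) ^ 2)⁻¹) ≤ ENNReal.ofReal (8 / √y) := by
  have hc : 1 ≤ √y := one_le_sqrt.2 hy
  have hterm (n : ℕ) : (y + (n : ℝ) ^ 2)⁻¹ ≤ 2 * ((√y + n) ^ 2)⁻¹ := by
    rw [← div_eq_mul_inv, inv_eq_one_div, div_le_div_iff₀ (by positivity) (by positivity)]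
    nlinarith [sq_sqrt (zero_le_one.trans hy), sq_nonneg (√y - n)]
  have hnat : ∑' n : ℕ, ENNReal.ofReal ((y + (n : ℝ) ^ 2)⁻¹) ≤ ENNReal.ofReal (4 / √y) :=
    calc ∑' n : ℕ, ENNReal.ofReal ((y + (n : ℝ) ^ 2)⁻¹)
        ≤ ∑' n : ℕ, ENNReal.ofReal 2 * ENNReal.ofReal (((√y + n) ^ 2)⁻¹) := by
          gcongr with n
          rw [← ENNReal.ofReal_mul zero_le_two]
          exact ENNReal.ofReal_le_ofReal (hterm n)
      _ ≤ ENNReal.ofReal 2 * ENNReal.ofReal (2 / √y) := by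
          rw [ENNReal.tsum_mul_left]; gcongr; exact tsum_inv_add_sq_le hc
      _ = ENNReal.ofReal (4 / √y) := by
          rw [← ENNReal.ofReal_mul zero_le_two]; ring_nf
  convert tsum_int_ofReal_le_of_even (g := fun t => (y + t ^ 2)⁻¹)
    (fun t => by simp only [neg_sq]) hnat using 2
  ring

lemma tsum_inv_sqrt_mul_sqrt_le {D : ℝ} (hD : 0 ≤ D) :
    ∑' n : ℕ, ENNReal.ofReal ((√(1 + D + n ^ 2) * √(1 + n ^ 2))⁻¹) ≤
      ENNReal.ofReal (4 * (1 + log (2 + √D)) / √(1 + D)) := by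
  set L := 1 + log (2 + √D)
  set N := ⌈√(1 + D)⌉₊
  have hx : 1 ≤ √(1 + D) := one_le_sqrt.2 (by linarith)
  have hN : √(1 + D) ≤ N := Nat.le_ceil _
  have hL : 1 ≤ L := by linarith [log_nonneg (show (1 : ℝ) ≤ 2 + √D by linarith [sqrt_nonneg D])]
  have hharmonic : ∑ n ∈ range N, ((n : ℝ) + 1)⁻¹ ≤ L := by
    have hH := harmonic_le_one_add_log N
    push_cast [harmonic] at hH
    have : √(1 + D) ≤ 1 + √D :=
      (sqrt_le_left (by positivity)).2 (by nlinarith [sq_sqrt hD, sqrt_nonneg D])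
    have hlog : log N ≤ log (2 + √D) :=
      log_le_log (by linarith) ((Nat.ceil_lt_add_one (sqrt_nonneg _)).le.trans (by linarith))
    linarith
  have head (n : ℕ) : (√(1 + D + n ^ 2) * √(1 + n ^ 2))⁻¹ ≤ 2 / √(1 + D) * ((n : ℝ) + 1)⁻¹ := by
    have hn : ((n : ℝ) + 1) / 2 ≤ √(1 + n ^ 2) := le_sqrt_of_sq_le (by nlinarith)
    have hD' : √(1 + D) ≤ √(1 + D + n ^ 2) := sqrt_le_sqrt (by linarith [sq_nonneg (n : ℝ)])
    calc (√(1 + D + n ^ 2) * √(1 + n ^ 2))⁻¹ ≤ (√(1 + D) * (((n : ℝ) + 1) / 2))⁻¹ :=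
          inv_anti₀ (by positivity) (mul_le_mul hD' hn (by positivity) (sqrt_nonneg _))
      _ = 2 / √(1 + D) * ((n : ℝ) + 1)⁻¹ := by field_simp
  have tail (k : ℕ) : (√(1 + D + ((k + N : ℕ) : ℝ) ^ 2) * √(1 + ((k + N : ℕ) : ℝ) ^ 2))⁻¹ ≤
      (((N : ℝ) + k) ^ 2)⁻¹ := by
    rw [show ((k + N : ℕ) : ℝ) = N + k by push_cast; ring, sq]
    exact inv_anti₀ (by nlinarith) (mul_le_mul (le_sqrt_of_sq_le (by nlinarith))
      (le_sqrt_of_sq_le (by nlinarith)) (by positivity) (sqrt_nonneg _))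
  have htail : ∑' k : ℕ, ENNReal.ofReal ((((N : ℝ) + k) ^ 2)⁻¹) ≤
      ENNReal.ofReal (2 / √(1 + D) * L) := by
    refine (tsum_inv_add_sq_le (hx.trans hN)).trans (ENNReal.ofReal_le_ofReal ?_)
    calc 2 / (N : ℝ) ≤ 2 / √(1 + D) := div_le_div_of_nonneg_left zero_le_two (by positivity) hN
      _ ≤ 2 / √(1 + D) * L := le_mul_of_one_le_right (by positivity) hL
  rw [← ENNReal.summable.sum_add_tsum_nat_add' (k := N)]
  calc _ ≤ ∑ n ∈ range N, ENNReal.ofReal (2 / √(1 + D) * ((n : ℝ) + 1)⁻¹) +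
        ∑' k : ℕ, ENNReal.ofReal ((((N : ℝ) + k) ^ 2)⁻¹) :=
        add_le_add (sum_le_sum fun n _ => ENNReal.ofReal_le_ofReal (head n))
          (ENNReal.tsum_le_tsum fun k => ENNReal.ofReal_le_ofReal (tail k))
    _ ≤ ENNReal.ofReal (2 / √(1 + D) * L) + ENNReal.ofReal (2 / √(1 + D) * L) := by
        rw [← ENNReal.ofReal_sum_of_nonneg fun n _ => by positivity, ← mul_sum]
        gcongr
    _ = ENNReal.ofReal (4 * L / √(1 + D)) := by
        rw [← ENNReal.ofReal_add (by positivity) (by positivity)]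
        ring_nf

lemma tsum_inv_mul_sqrt_le {D : ℝ} (hD : 0 ≤ D) :
    ∑' r : ℤ × ℤ, ENNReal.ofReal (((1 + nsq r) * √(1 + D + nsq r))⁻¹) ≤
      ENNReal.ofReal (64 * (1 + log (2 + √D)) / √(1 + D)) := by
  have hrow (a : ℤ) : ∑' b : ℤ, ENNReal.ofReal (((1 + nsq (a, b)) * √(1 + D + nsq (a, b)))⁻¹) ≤
      ENNReal.ofReal 8 * ENNReal.ofReal ((√(1 + D + (a : ℝ) ^ 2) * √(1 + (a : ℝ) ^ 2))⁻¹) := by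
    have hterm (b : ℤ) : ((1 + nsq (a, b)) * √(1 + D + nsq (a, b)))⁻¹ ≤
        (√(1 + D + (a : ℝ) ^ 2))⁻¹ * (1 + (a : ℝ) ^ 2 + (b : ℝ) ^ 2)⁻¹ := by
      have hp : 1 + nsq (a, b) = 1 + (a : ℝ) ^ 2 + (b : ℝ) ^ 2 := by rw [nsq]; ring
      have hs : √(1 + D + (a : ℝ) ^ 2) ≤ √(1 + D + nsq (a, b)) :=
        sqrt_le_sqrt (by rw [nsq]; linarith [sq_nonneg (b : ℝ)])
      rw [← mul_inv, hp]
      refine inv_anti₀ (by positivity) ?_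
      rw [mul_comm]
      exact mul_le_mul_of_nonneg_left hs (by positivity)
    calc _ ≤ ∑' b : ℤ, ENNReal.ofReal (√(1 + D + (a : ℝ) ^ 2))⁻¹ *
          ENNReal.ofReal ((1 + (a : ℝ) ^ 2 + (b : ℝ) ^ 2)⁻¹) := by
          refine ENNReal.tsum_le_tsum fun b => ?_
          rw [← ENNReal.ofReal_mul (by positivity)]
          exact ENNReal.ofReal_le_ofReal (hterm b)
      _ ≤ ENNReal.ofReal (√(1 + D + (a : ℝ) ^ 2))⁻¹ * ENNReal.ofReal (8 / √(1 + (a : ℝ) ^ 2)) := by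
          rw [ENNReal.tsum_mul_left]
          gcongr
          exact tsum_int_inv_add_sq_le (by linarith [sq_nonneg (a : ℝ)])
      _ = _ := by
          rw [← ENNReal.ofReal_mul (by positivity), ← ENNReal.ofReal_mul (by norm_num)]
          congr 1
          field_simp
  calc _ = ∑' a : ℤ, ∑' b : ℤ,
        ENNReal.ofReal (((1 + nsq (a, b)) * √(1 + D + nsq (a, b)))⁻¹) := ENNReal.tsum_prod'
    _ ≤ ENNReal.ofReal 8 *
        ∑' a : ℤ, ENNReal.ofReal ((√(1 + D + (a : ℝ) ^ 2) * √(1 + (a : ℝ) ^ 2))⁻¹) := by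
        rw [← ENNReal.tsum_mul_left]
        exact ENNReal.tsum_le_tsum hrow
    _ ≤ ENNReal.ofReal 8 * ENNReal.ofReal (2 * (4 * (1 + log (2 + √D)) / √(1 + D))) := by
        gcongr
        exact tsum_int_ofReal_le_of_even (g := fun t => (√(1 + D + t ^ 2) * √(1 + t ^ 2))⁻¹)
          (fun t => by simp only [neg_sq]) (tsum_inv_sqrt_mul_sqrt_le hD)
    _ = _ := by
        rw [← ENNReal.ofReal_mul (by norm_num)]
        ring_nf

lemma one_add_rpow_mul_one_add_rpow_le {β p q D : ℝ} (hβ₁ : 3 / 2 ≤ β) (hβ₂ : β ≤ 2) (hp : 0 ≤ p)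
    (hD : 0 ≤ D) (hq : 1 + D + p ≤ 5 * (1 + q)) :
    (1 + p) ^ (-(β / 2)) * (1 + q) ^ (-(β / 2)) ≤
      5 * (1 + D) ^ (3 / 2 - β) * ((1 + p) * √(1 + D + p))⁻¹ := by
  set y := 1 + D + p
  have hy : 0 < y := by positivity
  have hq₀ : 0 < 1 + q := by linarith
  have hfar : (1 + q) ^ (-(β / 2)) ≤ 5 * y ^ (-(β / 2)) :=
    calc (1 + q) ^ (-(β / 2)) ≤ (y / 5) ^ (-(β / 2)) :=
          rpow_le_rpow_of_nonpos (div_pos hy (by norm_num)) (by linarith) (by linarith)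
      _ = 5 ^ (β / 2) * y ^ (-(β / 2)) := by
          rw [div_rpow hy.le (by norm_num), rpow_neg (by norm_num : (0 : ℝ) ≤ 5)]
          field_simp
      _ ≤ 5 * y ^ (-(β / 2)) := by
          gcongr
          simpa using rpow_le_rpow_of_exponent_le (by norm_num : (1 : ℝ) ≤ 5)
            (by linarith : β / 2 ≤ 1)
  have hnear : (1 + p) ^ (-(β / 2)) ≤ (1 + p)⁻¹ * y ^ (1 - β / 2) :=
    calc (1 + p) ^ (-(β / 2)) = (1 + p)⁻¹ * (1 + p) ^ (1 - β / 2) := by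
          rw [← rpow_neg_one, ← rpow_add (by positivity)]; ring_nf
      _ ≤ (1 + p)⁻¹ * y ^ (1 - β / 2) :=
          mul_le_mul_of_nonneg_left (rpow_le_rpow (by positivity) (by linarith) (by linarith))
            (by positivity)
  calc (1 + p) ^ (-(β / 2)) * (1 + q) ^ (-(β / 2))
      ≤ (1 + p)⁻¹ * y ^ (1 - β / 2) * (5 * y ^ (-(β / 2))) :=
        mul_le_mul hnear hfar (rpow_pos_of_pos hq₀ _).le (by positivity)
    _ = 5 * y ^ (3 / 2 - β) * ((1 + p) * √y)⁻¹ := by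
        rw [sqrt_eq_rpow, mul_inv, ← rpow_neg hy.le]
        have : y ^ (1 - β / 2) * y ^ (-(β / 2)) = y ^ (3 / 2 - β) * y ^ (-(1 / 2) : ℝ) := by
          rw [← rpow_add hy, ← rpow_add hy]; ring_nf
        linear_combination 5 * (1 + p)⁻¹ * this
    _ ≤ 5 * (1 + D) ^ (3 / 2 - β) * ((1 + p) * √y)⁻¹ := by
        gcongr 5 * ?_ * _
        exact rpow_le_rpow_of_nonpos (by positivity) (by linarith) (by linarith)

lemma nsq_nonneg (p : ℤ × ℤ) : 0 ≤ nsq p := by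
  unfold nsq; positivity

lemma nsq_neg (p : ℤ × ℤ) : nsq (-p) = nsq p := by
  simp [nsq]

lemma nsq_sub_le (p q : ℤ × ℤ) : nsq (p - q) ≤ 2 * nsq p + 2 * nsq q := by
  simp only [nsq, Prod.fst_sub, Prod.snd_sub, Int.cast_sub]
  nlinarith [sq_nonneg ((p.1 : ℝ) + q.1), sq_nonneg ((p.2 : ℝ) + q.2)]

lemma bessel_mul_bessel_shift_le {β : ℝ} (hβ₁ : 3 / 2 ≤ β) (hβ₂ : β ≤ 2) (r d : ℤ × ℤ) :
    (1 + nsq r) ^ (-(β / 2)) * (1 + nsq (r + d)) ^ (-(β / 2)) ≤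
      5 * (1 + nsq d) ^ (3 / 2 - β) *
        (((1 + nsq r) * √(1 + nsq d + nsq r))⁻¹ +
          ((1 + nsq (-r - d)) * √(1 + nsq d + nsq (-r - d)))⁻¹) := by
  wlog h : nsq r ≤ nsq (r + d) generalizing r
  · have hr : nsq (-r - d) = nsq (r + d) := by rw [← nsq_neg, neg_sub, sub_neg_eq_add, add_comm]
    have hrd : nsq (-r - d + d) = nsq r := by rw [sub_add_cancel, nsq_neg]
    have := this (-r - d) (by rw [hr, hrd]; exact (not_le.1 h).le)
    rw [hrd, show -(-r - d) - d = r by abel, hr] at this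
    rw [hr]
    linarith
  have hd : nsq d ≤ 4 * nsq (r + d) := by
    have := nsq_sub_le (r + d) r
    rw [add_sub_cancel_left] at this
    linarith
  refine (one_add_rpow_mul_one_add_rpow_le hβ₁ hβ₂ (nsq_nonneg r) (nsq_nonneg d)
    (by linarith [nsq_nonneg r])).trans ?_
  refine mul_le_mul_of_nonneg_left (le_add_of_nonneg_right ?_)
    (mul_nonneg (by norm_num) (rpow_nonneg (by linarith [nsq_nonneg d]) _))
  exact inv_nonneg.2 (mul_nonneg (by linarith [nsq_nonneg (-r - d)]) (sqrt_nonneg _))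

/-- Convolution bound for translated fractional-Bessel coefficients:
for `3/2 < β ≤ 2`,
`∑_r (1+|r|²)^{-β/2} (1+|r+d|²)^{-β/2} ≤ C (1+log(2+|d|)) (1+|d|²)^{-(β-1)}`. -/
theorem bessel_convolution_schur_bound (β : ℝ) (hβ1 : 3 / 2 < β) (hβ2 : β ≤ 2) :
    ∃ C : ℝ, 0 < C ∧ ∀ d : ℤ × ℤ,
      ∑' r : ℤ × ℤ,
        ENNReal.ofReal ((1 + nsq r) ^ (-(β / 2)) * (1 + nsq (r + d)) ^ (-(β / 2))) ≤
      ENNReal.ofReal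
        (C * (1 + Real.log (2 + Real.sqrt (nsq d))) * (1 + nsq d) ^ (-(β - 1))) := by
  refine ⟨640, by norm_num, fun d => ?_⟩
  have hx : 0 < 1 + nsq d := by linarith [nsq_nonneg d]
  set L := 1 + log (2 + √(nsq d))
  set A := 5 * (1 + nsq d) ^ (3 / 2 - β)
  have hA₀ : 0 ≤ A := mul_nonneg (by norm_num) (rpow_nonneg hx.le _)
  set K : ℤ × ℤ → ℝ≥0∞ := fun r => ENNReal.ofReal (((1 + nsq r) * √(1 + nsq d + nsq r))⁻¹)
  have hK : ∑' r, K (-r - d) = ∑' r, K r := ((Equiv.neg _).trans (Equiv.subRight d)).tsum_eq K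
  have hA : A / √(1 + nsq d) = 5 * (1 + nsq d) ^ (-(β - 1)) := by
    rw [sqrt_eq_rpow, mul_div_assoc, ← rpow_sub hx]
    ring_nf
  calc _ ≤ ∑' r, ENNReal.ofReal A * (K r + K (-r - d)) := by
        refine ENNReal.tsum_le_tsum fun r => ?_
        refine (ENNReal.ofReal_le_ofReal (bessel_mul_bessel_shift_le hβ1.le hβ2 r d)).trans ?_
        rw [ENNReal.ofReal_mul hA₀]
        gcongr
        exact ENNReal.ofReal_add_le
    _ = ENNReal.ofReal A * (2 * ∑' r, K r) := by
        rw [ENNReal.tsum_mul_left, ENNReal.tsum_add, hK, two_mul]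
    _ ≤ ENNReal.ofReal A * (2 * ENNReal.ofReal (64 * L / √(1 + nsq d))) := by
        gcongr
        exact tsum_inv_mul_sqrt_le (nsq_nonneg d)
    _ = _ := by
        rw [show (2 : ℝ≥0∞) = ENNReal.ofReal 2 by norm_num, ← ENNReal.ofReal_mul (by norm_num),
          ← ENNReal.ofReal_mul hA₀]
        congr 1
        rw [show A * (2 * (64 * L / √(1 + nsq d))) = 128 * L * (A / √(1 + nsq d)) by ring, hA]
        ring
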